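/- The following identity of rational functions in t, w, v, q holds: q^2*(t+w*q)/(1-t*q^2) + q^6*(w^2+v*q+q^2)/((1-t*q^2)(1-w*q^3)) + q^{12}*(1+q+v^2*q^2+v*q^3+q^4+q^5+q^6)/((1-t*q^2)(1-w*q^3)(1-v*q^7)) = q^2*(t+q*w+q^2*t^2+q^3*t*w+q^4*t^3+q^5*v+q^6)/(1-v*q^7) + q^6*(w^2+q*t^2*w+q^2*t^4+w^3*q^3+t*q^4+w*q^5+w^4*q^6)/((1-t*q^2)(1-v*q^7)) + q^{12}*(1+q+q^2*w^2+q^3*w^5+q^4+q^5+q^6)/((1-t*q^2)(1-w*q^3)(1-v*q^7)). -/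

import Mathlib

noncomputable section

open MvPolynomial

/-- The field of rational functions in `t`, `w`, `v` and `q` over `ℚ`. -/
abbrev F : Type := FractionRing (MvPolynomial (Fin 4) ℚ)

def t : F := algebraMap (MvPolynomial (Fin 4) ℚ) F (X 0)
def w : F := algebraMap (MvPolynomial (Fin 4) ℚ) F (X 1)
def v : F := algebraMap (MvPolynomial (Fin 4) ℚ) F (X 2)
def q : F := algebraMap (MvPolynomial (Fin 4) ℚ) F (X 3)

theorem MvPolynomial.one_sub_ne_zero_of_constantCoeff_eq_zero {σ R : Type*} [CommRing R]
    [Nontrivial R] {p : MvPolynomial σ R} (hp : constantCoeff p = 0) : 1 - p ≠ 0 := by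
  intro h
  simpa [hp] using congrArg constantCoeff h

theorem MvPolynomial.one_sub_X_pow_mul_X_ne_zero {σ R : Type*} [CommRing R] [Nontrivial R]
    (i j : σ) (n : ℕ) :
    (1 : FractionRing (MvPolynomial σ R)) -
      algebraMap (MvPolynomial σ R) _ (X j) ^ n * algebraMap (MvPolynomial σ R) _ (X i)
      ≠ 0 := by
  have hp : (1 : MvPolynomial σ R) - X j ^ n * X i ≠ 0 :=
    one_sub_ne_zero_of_constantCoeff_eq_zero (by simp)
  simpa using (map_ne_zero_iff _ <| IsFractionRing.injective (MvPolynomial σ R)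
    (FractionRing (MvPolynomial σ R))).2 hp

set_option maxHeartbeats 2000000 in
theorem stmt8 :
    q ^ 2 * (t + w * q) / (1 - t * q ^ 2)
        + q ^ 6 * (w ^ 2 + v * q + q ^ 2) / ((1 - t * q ^ 2) * (1 - w * q ^ 3))
        + q ^ 12 * (1 + q + v ^ 2 * q ^ 2 + v * q ^ 3 + q ^ 4 + q ^ 5 + q ^ 6) /
            ((1 - t * q ^ 2) * (1 - w * q ^ 3) * (1 - v * q ^ 7))
      = q ^ 2 * (t + q * w + q ^ 2 * t ^ 2 + q ^ 3 * t * w + q ^ 4 * t ^ 3 + q ^ 5 * v + q ^ 6) /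
            (1 - v * q ^ 7)
        + q ^ 6 * (w ^ 2 + q * t ^ 2 * w + q ^ 2 * t ^ 4 + w ^ 3 * q ^ 3 + t * q ^ 4
              + w * q ^ 5 + w ^ 4 * q ^ 6) / ((1 - t * q ^ 2) * (1 - v * q ^ 7))
        + q ^ 12 * (1 + q + q ^ 2 * w ^ 2 + q ^ 3 * w ^ 5 + q ^ 4 + q ^ 5 + q ^ 6) /
            ((1 - t * q ^ 2) * (1 - w * q ^ 3) * (1 - v * q ^ 7)) := by
  have ht : (1 : F) - q ^ 2 * t ≠ 0 := one_sub_X_pow_mul_X_ne_zero 0 3 2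
  have hw : (1 : F) - q ^ 3 * w ≠ 0 := one_sub_X_pow_mul_X_ne_zero 1 3 3
  have hv : (1 : F) - q ^ 7 * v ≠ 0 := one_sub_X_pow_mul_X_ne_zero 2 3 7
  field_simp
  ring

end
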